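/- In Ind(C) for C a category with finite limits, an ind-object Y is semi-strict if and only if for any two ind-objects X and Z equipped with maps to Y, the canonical map X ×_Y Z → X × Z is proper. -/

import Mathlib

/-!
If `Y` is semi-strict, pull the map `X ×_Y Z ⟶ X ⨯ Z` back along `h : W ⟶ X ⨯ Z` with `W`
compact. Writing `a, b : W ⟶ Y` for the two composites through `X` and `Z`, the result is the
equalizer of `a` and `b`, i.e. the pullback of `W ×_Y W ⟶ W ⨯ W` along the diagonal of `W`.
Here `W ×_Y W` is compact by semi-strictness, and compact objects are closed under finite limits
because `C` has them and `Ind.yoneda` preserves them. Conversely, pulling back along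
`𝟙 (X ⨯ Z)` for compact `X` and `Z` recovers `X ×_Y Z`.
-/

open CategoryTheory CategoryTheory.Limits

universe v u

variable {C : Type u} [Category.{v} C]

/-- An object of `Ind C` is compact if it lies in the essential image of `C`. -/
noncomputable def IndCompact (X : Ind C) : Prop :=
  ∃ c : C, Nonempty (X ≅ Ind.yoneda.obj c)

/-- A morphism `f : X ⟶ Y` in `Ind C` is proper if for any `g : Z ⟶ Y` with `Z` compact,
the pullback `X ×_Y Z` is compact. -/
noncomputable def IsProper [HasPullbacks (Ind C)] {X Y : Ind C} (f : X ⟶ Y) : Prop :=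
  ∀ (Z : Ind C) (g : Z ⟶ Y), IndCompact Z → IndCompact (pullback f g)

/-- An ind-object `Y` is semi-strict if any map from a compact object to `Y` is proper. -/
noncomputable def IsSemiStrict [HasPullbacks (Ind C)] (Y : Ind C) : Prop :=
  ∀ (X : Ind C) (f : X ⟶ Y), IndCompact X → IsProper f

section General

variable {D : Type*} [Category D] [HasPullbacks D] [HasBinaryProducts D]

lemma isPullback_pullbackMap_prodLift {X Y Z W₁ W₂ : D} (f : X ⟶ Y) (g : Z ⟶ Y)
    (u : W₁ ⟶ X) (v : W₂ ⟶ Z) :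
    IsPullback (pullback.map (u ≫ f) (v ≫ g) f g u v (𝟙 Y) (by simp) (by simp))
      (prod.lift (pullback.fst (u ≫ f) (v ≫ g)) (pullback.snd (u ≫ f) (v ≫ g)))
      (prod.lift (pullback.fst f g) (pullback.snd f g)) (prod.map u v) := by
  have cone_eqs (s : PullbackCone (prod.lift (pullback.fst f g) (pullback.snd f g))
      (prod.map u v)) : s.fst ≫ pullback.fst f g = s.snd ≫ prod.fst ≫ u ∧
        s.fst ≫ pullback.snd f g = s.snd ≫ prod.snd ≫ v := by
    have h₁ := s.condition =≫ prod.fst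
    have h₂ := s.condition =≫ prod.snd
    simp only [Category.assoc, prod.lift_fst, prod.map_fst, prod.lift_snd, prod.map_snd] at h₁ h₂
    exact ⟨h₁, h₂⟩
  refine ⟨⟨by ext <;> simp [prod.lift_fst, prod.lift_snd, pullback.lift_fst, pullback.lift_snd]⟩,
    ⟨PullbackCone.IsLimit.mk _ (fun s => pullback.lift (s.snd ≫ prod.fst) (s.snd ≫ prod.snd) ?_)
      ?_ ?_ ?_⟩⟩
  · obtain ⟨h₁, h₂⟩ := cone_eqs s
    simp only [Category.assoc, ← reassoc_of% h₁, ← reassoc_of% h₂, pullback.condition]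
  · intro s
    obtain ⟨h₁, h₂⟩ := cone_eqs s
    ext <;> simp [h₁, h₂, pullback.lift_fst, pullback.lift_snd, pullback.lift_fst_assoc,
      pullback.lift_snd_assoc]
  · intro s
    ext <;> simp [prod.lift_fst, prod.lift_snd, pullback.lift_fst, pullback.lift_snd]
  · intro s m _ hm
    ext
    · simpa [prod.lift_fst, pullback.lift_fst] using hm =≫ prod.fst
    · simpa [prod.lift_snd, pullback.lift_snd] using hm =≫ prod.snd

noncomputable def pullbackProdLiftIso {X Y Z W : D} (f : X ⟶ Y) (g : Z ⟶ Y) (h : W ⟶ X ⨯ Z) :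
    pullback (prod.lift (pullback.fst f g) (pullback.snd f g)) h ≅
      pullback (prod.lift (pullback.fst ((h ≫ prod.fst) ≫ f) ((h ≫ prod.snd) ≫ g))
        (pullback.snd ((h ≫ prod.fst) ≫ f) ((h ≫ prod.snd) ≫ g))) (diag W) :=
  have hdiag : diag W ≫ prod.map (h ≫ prod.fst) (h ≫ prod.snd) = h := by
    rw [prod.lift_map, Category.id_comp, Category.id_comp, ← prod.comp_lift, prod.lift_fst_snd,
      Category.comp_id]
  have square := (IsPullback.of_hasPullback _ _).paste_horiz
    (isPullback_pullbackMap_prodLift f g (h ≫ prod.fst) (h ≫ prod.snd))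
  (hdiag ▸ square).isoPullback.symm

end General

lemma IndCompact.of_iso {X X' : Ind C} (h : IndCompact X) (e : X ≅ X') : IndCompact X' := by
  obtain ⟨c, ⟨i⟩⟩ := h
  exact ⟨c, ⟨e.symm ≪≫ i⟩⟩

lemma indCompact_pullback [HasFiniteLimits C] [HasPullbacks (Ind C)]
    {X Z W : Ind C} (f : X ⟶ W) (g : Z ⟶ W)
    (hX : IndCompact X) (hZ : IndCompact Z) (hW : IndCompact W) :
    IndCompact (pullback f g) := by
  obtain ⟨a, ⟨ea⟩⟩ := hX
  obtain ⟨b, ⟨eb⟩⟩ := hZ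
  obtain ⟨w, ⟨ew⟩⟩ := hW
  let f' : a ⟶ w := Ind.yoneda.preimage (ea.inv ≫ f ≫ ew.hom)
  let g' : b ⟶ w := Ind.yoneda.preimage (eb.inv ≫ g ≫ ew.hom)
  have e : pullback f g ≅ pullback (Ind.yoneda.map f') (Ind.yoneda.map g') :=
    asIso (pullback.map f g _ _ ea.hom eb.hom ew.hom
      (by simp [f', Functor.map_preimage]) (by simp [g', Functor.map_preimage]))
  exact ⟨pullback f' g', ⟨e ≪≫ (PreservesPullback.iso Ind.yoneda f' g').symm⟩⟩

lemma indCompact_prod [HasFiniteLimits C] [HasBinaryProducts (Ind C)]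
    {X Z : Ind C} (hX : IndCompact X) (hZ : IndCompact Z) : IndCompact (X ⨯ Z) := by
  obtain ⟨a, ⟨ea⟩⟩ := hX
  obtain ⟨b, ⟨eb⟩⟩ := hZ
  exact ⟨a ⨯ b, ⟨prod.mapIso ea eb ≪≫ (PreservesLimitPair.iso Ind.yoneda a b).symm⟩⟩

lemma IsSemiStrict.isProper_prodLift [HasFiniteLimits C] [HasPullbacks (Ind C)]
    [HasBinaryProducts (Ind C)] {X Y Z : Ind C} (hY : IsSemiStrict Y) (f : X ⟶ Y) (g : Z ⟶ Y) :
    IsProper (prod.lift (pullback.fst f g) (pullback.snd f g)) := by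
  intro W h hW
  have hWW : IndCompact (pullback ((h ≫ prod.fst) ≫ f) ((h ≫ prod.snd) ≫ g)) :=
    hY W _ hW W _ hW
  exact (indCompact_pullback _ _ hWW hW (indCompact_prod hW hW)).of_iso (pullbackProdLiftIso f g h).symm

/-- An ind-object `Y` is semi-strict if and only if for any two ind-objects `X`
and `Z` equipped with maps to `Y`, the canonical map `X ×_Y Z ⟶ X × Z` is proper. -/
theorem stmt_8 [HasFiniteLimits C] [HasPullbacks (Ind C)] [HasBinaryProducts (Ind C)]
    (Y : Ind C) :
    IsSemiStrict Y ↔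
      ∀ (X Z : Ind C) (f : X ⟶ Y) (g : Z ⟶ Y),
        IsProper (prod.lift (pullback.fst f g) (pullback.snd f g)) := by
  refine ⟨fun hY X Z f g => hY.isProper_prodLift f g, fun H X f hX Z g hZ => ?_⟩
  exact (H X Z f g (X ⨯ Z) (𝟙 _) (indCompact_prod hX hZ)).of_iso (asIso (pullback.fst _ _))
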